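/- Mandelstam–Tamm inequality for a time-independent Hamiltonian: let H be a self-adjoint bounded operator on a complex Hilbert space E, let ψ₀ be a unit vector, and for t ∈ ℝ let ψ_t = exp(−i t H)·ψ₀, where exp denotes the operator exponential of the bounded operator −i t H. Then for every t ≥ 0, arccos|⟨ψ₀, ψ_t⟩| ≤ t·√(‖Hψ₀‖² − (Re⟨ψ₀, Hψ₀⟩)²). -/

import Mathlib

/-!
Multiplying the overlap by the phase `exp (i ⟨H⟩ s)` removes the mean energy, so
`c s = exp (i ⟨H⟩ s) ⟪ψ₀, ψ s⟫` has derivative `-i exp (i ⟨H⟩ s) ⟪w, ψ s⟫`, where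
`w = Hψ₀ - ⟨H⟩ψ₀ ⊥ ψ₀` and `‖w‖ = ΔE`. Projecting `ψ s` off `ψ₀` gives
`|c'| ≤ ΔE √(1 - |c|²)`, and comparing `Re c` with the solution `cos (ΔE s)` of the extremal
equation `g' = -ΔE √(1 - g²)` yields `cos (ΔE t) ≤ Re c t ≤ |c t|` as long as `ΔE t < π`.
-/

open scoped InnerProductSpace
open Real Filter Topology

section Comparison

variable {g g' : ℝ → ℝ} {Δ : ℝ}

/-- The barrier `cos (D * (s + δ))` starts at or below `g 0 = 1`, and the slack `D > Δ` makes it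
fall strictly faster than `g` wherever the two meet (`sin > 0` there because of the shift `δ`),
which is what the fencing theorem needs. -/
theorem cos_mul_add_le_of_abs_deriv_le (hΔ : 0 ≤ Δ) (hg : ∀ s, HasDerivAt g (g' s) s)
    (hbound : ∀ s, |g' s| ≤ Δ * √(1 - g s ^ 2)) (hg0 : g 0 = 1)
    {D δ t : ℝ} (hΔD : Δ < D) (hδ : 0 < δ) (ht : 0 ≤ t) (hπ : D * (t + δ) ≤ π) :
    cos (D * (t + δ)) ≤ g t := by
  have hD : 0 < D := hΔ.trans_lt hΔD
  have hf : ∀ x, HasDerivAt (fun x ↦ cos (D * (x + δ))) (-sin (D * (x + δ)) * D) x := fun x ↦ by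
    simpa using (((hasDerivAt_id x).add_const δ).const_mul D).cos
  refine image_le_of_deriv_right_lt_deriv_boundary
    (fun x _ ↦ (hf x).continuousAt.continuousWithinAt) (fun x _ ↦ (hf x).hasDerivWithinAt)
    (by simpa [hg0] using cos_le_one _) hg ?_ ⟨ht, le_rfl⟩
  rintro x ⟨hx0, hxt⟩ hcontact
  have hsin : 0 < sin (D * (x + δ)) :=
    sin_pos_of_pos_of_lt_pi (by positivity) (by nlinarith)
  have hsqrt : √(1 - g x ^ 2) = sin (D * (x + δ)) := by
    rw [← hcontact, ← sin_sq, sqrt_sq hsin.le]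
  have hlower := (abs_le.1 ((hbound x).trans_eq (by rw [hsqrt]))).1
  nlinarith

theorem cos_mul_le_of_abs_deriv_le (hΔ : 0 ≤ Δ) (hg : ∀ s, HasDerivAt g (g' s) s)
    (hbound : ∀ s, |g' s| ≤ Δ * √(1 - g s ^ 2)) (hg0 : g 0 = 1)
    {t : ℝ} (ht : 0 ≤ t) (hπ : Δ * t < π) : cos (Δ * t) ≤ g t := by
  have hlim : Tendsto (fun ε : ℝ ↦ (Δ + ε) * (t + ε)) (𝓝[>] 0) (𝓝 (Δ * t)) := by
    have := ((continuous_const.add continuous_id).mul (continuous_const.add continuous_id)).tendsto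
      (0 : ℝ) (f := fun ε : ℝ ↦ (Δ + ε) * (t + ε))
    simpa using this.mono_left nhdsWithin_le_nhds
  refine le_of_tendsto ((continuous_cos.tendsto _).comp hlim) ?_
  filter_upwards [self_mem_nhdsWithin, hlim.eventually (eventually_lt_nhds hπ)] with ε hε hlt
  exact cos_mul_add_le_of_abs_deriv_le hΔ hg hbound hg0 (lt_add_of_pos_right Δ hε) hε ht hlt.le

theorem arccos_le_mul_of_abs_deriv_le (hΔ : 0 ≤ Δ) (hg : ∀ s, HasDerivAt g (g' s) s)
    (hbound : ∀ s, |g' s| ≤ Δ * √(1 - g s ^ 2)) (hg0 : g 0 = 1)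
    {t : ℝ} (ht : 0 ≤ t) : arccos (g t) ≤ Δ * t := by
  rcases lt_or_ge (Δ * t) π with hπ | hπ
  · calc arccos (g t) ≤ arccos (cos (Δ * t)) :=
          arccos_le_arccos (cos_mul_le_of_abs_deriv_le hΔ hg hbound hg0 ht hπ)
      _ = Δ * t := arccos_cos (by positivity) hπ.le
  · exact (arccos_le_pi _).trans hπ

theorem arccos_norm_le_of_norm_deriv_le {c c' : ℝ → ℂ} (hΔ : 0 ≤ Δ)
    (hc : ∀ s, HasDerivAt c (c' s) s) (hbound : ∀ s, ‖c' s‖ ≤ Δ * √(1 - ‖c s‖ ^ 2))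
    (hc0 : c 0 = 1) {t : ℝ} (ht : 0 ≤ t) : arccos ‖c t‖ ≤ Δ * t := by
  have hre : ∀ s, HasDerivAt (fun s ↦ (c s).re) (c' s).re s := fun s ↦
    Complex.reCLM.hasFDerivAt.comp_hasDerivAt s (hc s)
  have hre_bound : ∀ s, |(c' s).re| ≤ Δ * √(1 - (c s).re ^ 2) := fun s ↦ by
    refine (Complex.abs_re_le_norm _).trans ((hbound s).trans ?_)
    have := pow_le_pow_left₀ (abs_nonneg _) (Complex.abs_re_le_norm (c s)) 2
    rw [sq_abs] at this
    gcongr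
  calc arccos ‖c t‖ ≤ arccos (c t).re := arccos_le_arccos (Complex.re_le_norm _)
    _ ≤ Δ * t := arccos_le_mul_of_abs_deriv_le hΔ hre hre_bound (by simp [hc0]) ht

end Comparison

section Geometry

variable {𝕜 E : Type*} [RCLike 𝕜] [NormedAddCommGroup E] [InnerProductSpace 𝕜 E] {x y w : E}

theorem inner_sub_inner_smul_self_eq_zero (hx : ‖x‖ = 1) (y : E) :
    ⟪x, y - ⟪x, y⟫_𝕜 • x⟫_𝕜 = 0 := by
  rw [inner_sub_right, inner_smul_right, inner_self_eq_norm_sq_to_K, hx]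
  simp

theorem norm_sub_inner_smul_sq (hx : ‖x‖ = 1) (y : E) :
    ‖y - ⟪x, y⟫_𝕜 • x‖ ^ 2 = ‖y‖ ^ 2 - ‖⟪x, y⟫_𝕜‖ ^ 2 := by
  rw [@norm_sub_sq 𝕜, inner_smul_right, ← inner_conj_symm y x, RCLike.mul_conj, norm_smul, hx,
    ← RCLike.ofReal_pow, RCLike.ofReal_re]
  ring

theorem norm_inner_le_of_inner_eq_zero (hx : ‖x‖ = 1) (hy : ‖y‖ = 1) (hw : ⟪w, x⟫_𝕜 = 0) :
    ‖⟪w, y⟫_𝕜‖ ≤ ‖w‖ * √(1 - ‖⟪x, y⟫_𝕜‖ ^ 2) := by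
  have hproj : ⟪w, y⟫_𝕜 = ⟪w, y - ⟪x, y⟫_𝕜 • x⟫_𝕜 := by
    rw [inner_sub_right, inner_smul_right, hw, mul_zero, sub_zero]
  calc ‖⟪w, y⟫_𝕜‖ ≤ ‖w‖ * ‖y - ⟪x, y⟫_𝕜 • x‖ := hproj ▸ norm_inner_le_norm _ _
    _ = ‖w‖ * √(1 - ‖⟪x, y⟫_𝕜‖ ^ 2) := by
      have hsq := norm_sub_inner_smul_sq (𝕜 := 𝕜) hx y
      rw [hy, one_pow] at hsq
      rw [← hsq, sqrt_sq (norm_nonneg _)]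

end Geometry

theorem hasDerivAt_exp_neg_I_mul_smul_apply {E : Type*} [NormedAddCommGroup E]
    [InnerProductSpace ℂ E] [CompleteSpace E] (H : E →L[ℂ] E) (x : E) (s : ℝ) :
    HasDerivAt (fun t : ℝ ↦ NormedSpace.exp ((-(Complex.I * t)) • H) x)
      ((-Complex.I) • H (NormedSpace.exp ((-(Complex.I * s)) • H) x)) s := by
  have hsmul : ∀ t : ℝ, (-(Complex.I * t)) • H = t • ((-Complex.I) • H) := fun t ↦ by
    rw [← Complex.coe_smul, smul_smul]
    ring_nf
  simp_rw [hsmul]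
  exact ((ContinuousLinearMap.apply ℂ E x).restrictScalars ℝ).hasFDerivAt.comp_hasDerivAt s
    (hasDerivAt_exp_smul_const' ((-Complex.I) • H) s)

section Schrodinger

variable {E : Type*} [NormedAddCommGroup E] [InnerProductSpace ℂ E]
  {H : E →ₗ[ℂ] E} {ψ : ℝ → E}

theorem norm_eq_norm_zero_of_hasDerivAt (hH : H.IsSymmetric)
    (hψ : ∀ s, HasDerivAt ψ ((-Complex.I) • H (ψ s)) s) (s : ℝ) : ‖ψ s‖ = ‖ψ 0‖ := by
  have hd : ∀ s, HasDerivAt (fun s ↦ ⟪ψ s, ψ s⟫_ℂ) 0 s := fun s ↦ by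
    refine ((hψ s).inner ℂ (hψ s)).congr_deriv ?_
    rw [inner_smul_left, inner_smul_right, hH]
    simp
  have hconst := is_const_of_deriv_eq_zero (fun s ↦ (hd s).differentiableAt)
    (fun s ↦ (hd s).deriv) s 0
  simp only [inner_self_eq_norm_sq_to_K] at hconst
  exact_mod_cast (sq_eq_sq₀ (norm_nonneg _) (norm_nonneg _)).1 (by exact_mod_cast hconst)

theorem hasDerivAt_exp_mul_inner (hH : H.IsSymmetric)
    (hψ : ∀ s, HasDerivAt ψ ((-Complex.I) • H (ψ s)) s) (x : E) (μ s : ℝ) :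
    HasDerivAt (fun s : ℝ ↦ Complex.exp (Complex.I * μ * s) * ⟪x, ψ s⟫_ℂ)
      (-Complex.I * Complex.exp (Complex.I * μ * s) * ⟪H x - (μ : ℂ) • x, ψ s⟫_ℂ) s := by
  have hexp : HasDerivAt (fun s : ℝ ↦ Complex.exp (Complex.I * μ * s))
      (Complex.exp (Complex.I * μ * s) * (Complex.I * μ)) s := by
    simpa using ((hasDerivAt_id s).ofReal_comp.const_mul (Complex.I * μ)).cexp
  refine (hexp.mul ((hasDerivAt_const s x).inner ℂ (hψ s))).congr_deriv ?_
  rw [inner_sub_left, inner_smul_left, inner_smul_right, inner_zero_left, ← hH, Complex.conj_ofReal]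
  ring

theorem arccos_norm_inner_le_of_hasDerivAt (hH : H.IsSymmetric)
    (hψ : ∀ s, HasDerivAt ψ ((-Complex.I) • H (ψ s)) s) (hψ0 : ‖ψ 0‖ = 1) {t : ℝ} (ht : 0 ≤ t) :
    arccos ‖⟪ψ 0, ψ t⟫_ℂ‖ ≤ ‖H (ψ 0) - ⟪ψ 0, H (ψ 0)⟫_ℂ • ψ 0‖ * t := by
  set x := ψ 0
  set μ := (⟪x, H x⟫_ℂ).re
  have hμ : (μ : ℂ) = ⟪x, H x⟫_ℂ := hH.coe_re_inner_self_apply x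
  have hphase : ∀ s : ℝ, ‖Complex.exp (Complex.I * μ * s)‖ = 1 := fun s ↦ by
    simp [Complex.norm_exp]
  have horth : ⟪H x - (μ : ℂ) • x, x⟫_ℂ = 0 := by
    rw [inner_eq_zero_symm, hμ]
    exact inner_sub_inner_smul_self_eq_zero hψ0 _
  have hbound : ∀ s : ℝ,
      ‖-Complex.I * Complex.exp (Complex.I * μ * s) * ⟪H x - (μ : ℂ) • x, ψ s⟫_ℂ‖
        ≤ ‖H x - (μ : ℂ) • x‖ * √(1 - ‖Complex.exp (Complex.I * μ * s) * ⟪x, ψ s⟫_ℂ‖ ^ 2) :=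
    fun s ↦ by
    simp only [norm_mul, norm_neg, Complex.norm_I, hphase, one_mul]
    exact norm_inner_le_of_inner_eq_zero hψ0 ((norm_eq_norm_zero_of_hasDerivAt hH hψ s).trans hψ0)
      horth
  have key := arccos_norm_le_of_norm_deriv_le (norm_nonneg _)
    (hasDerivAt_exp_mul_inner hH hψ x μ) hbound (by simp [x, inner_self_eq_norm_sq_to_K, hψ0]) ht
  rwa [norm_mul, hphase, one_mul, hμ] at key

end Schrodinger

/-- Mandelstam–Tamm inequality for a time-independent
Hamiltonian: for a self-adjoint bounded operator `H`, a unit vector `ψ₀`, and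
`ψ_t = exp(-i t H) ψ₀`, one has, for every `t ≥ 0`,
`arccos |⟨ψ₀, ψ_t⟩| ≤ t √(‖Hψ₀‖² - (Re⟨ψ₀, Hψ₀⟩)²)`. -/
theorem mandelstam_tamm_time_independent
    {E : Type*} [NormedAddCommGroup E] [InnerProductSpace ℂ E] [CompleteSpace E]
    (H : E →L[ℂ] E) (hH : ∀ x y : E, ⟪H x, y⟫_ℂ = ⟪x, H y⟫_ℂ)
    (ψ₀ : E) (hψ₀ : ‖ψ₀‖ = 1)
    (ψ : ℝ → E)
    (hψ : ∀ t : ℝ, ψ t = (NormedSpace.exp ((-(Complex.I * t)) • H)) ψ₀)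
    (t : ℝ) (ht : 0 ≤ t) :
    Real.arccos ‖⟪ψ₀, ψ t⟫_ℂ‖
      ≤ t * Real.sqrt (‖H ψ₀‖ ^ 2 - ((⟪ψ₀, H ψ₀⟫_ℂ).re) ^ 2) := by
  have hsymm : (H : E →ₗ[ℂ] E).IsSymmetric := hH
  have hderiv : ∀ s, HasDerivAt ψ ((-Complex.I) • H (ψ s)) s := fun s ↦ by
    rw [funext hψ]
    exact hasDerivAt_exp_neg_I_mul_smul_apply H ψ₀ s
  have h0 : ψ 0 = ψ₀ := by simp [hψ]
  have hΔ : √(‖H ψ₀‖ ^ 2 - ((⟪ψ₀, H ψ₀⟫_ℂ).re) ^ 2) = ‖H ψ₀ - ⟪ψ₀, H ψ₀⟫_ℂ • ψ₀‖ := by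
    have hmean : ‖⟪ψ₀, H ψ₀⟫_ℂ‖ = |(⟪ψ₀, H ψ₀⟫_ℂ).re| := by
      rw [← Real.norm_eq_abs, ← Complex.norm_real]
      exact congrArg norm (hsymm.coe_re_inner_self_apply ψ₀).symm
    rw [← sq_abs (⟪ψ₀, H ψ₀⟫_ℂ).re, ← hmean, ← norm_sub_inner_smul_sq hψ₀, sqrt_sq (norm_nonneg _)]
  have key := arccos_norm_inner_le_of_hasDerivAt hsymm hderiv (h0 ▸ hψ₀) ht
  rw [h0] at key
  rwa [hΔ, mul_comm]
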